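/- arXiv:2507.07826 — 2 statements merged into one kernel-verified Lean document; each statement's English description precedes it below -/
import Mathlib

section
/- Let (X_t)_{t∈ℕ} be a random process with joint law μ, let m, τ ∈ ℕ, and let I_1, …, I_m and I'_1, …, I'_m be the interlaced blocks of length τ. Then for every event B ∈ Σ(I_1 ∪ … ∪ I_m), |μ_{I_1∪…∪I_m}(B) − (μ_{I_1} × … × μ_{I_m})(B)| ≤ (m−1) β_μ(τ), and for every B′ ∈ Σ(I'_1 ∪ … ∪ I'_m), |μ_{I'_1∪…∪I'_m}(B′) − (μ_{I'_1} × … × μ_{I'_m})(B′)| ≤ (m−1) β_μ(τ). -/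
open MeasureTheory ProbabilityTheory Finset

/-- The β-mixing coefficients of a process `X` with law induced by `P`. -/
noncomputable def betaMix {Ω 𝒳 : Type*} [MeasurableSpace Ω] [MeasurableSpace 𝒳]
    (P : Measure Ω) (X : ℕ → Ω → 𝒳) (τ : ℕ) : ℝ :=
  ⨆ j : ℕ, ⨆ A : {A : Set ((Set.Icc 1 j → 𝒳) × (Set.Ici (j + τ) → 𝒳)) // MeasurableSet A},
    |(P ((fun ω => ((fun i : Set.Icc 1 j => X i.1 ω), (fun i : Set.Ici (j + τ) => X i.1 ω))) ⁻¹' A.1)).toReal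
      - (((P.map fun ω => fun i : Set.Icc 1 j => X i.1 ω).prod
          (P.map fun ω => fun i : Set.Ici (j + τ) => X i.1 ω)) A.1).toReal|

/-- The product measure `μ_{J_1} × … × μ_{J_m}` of the laws of the blocks
`J_k = {2(k−1)τ + s + 1, …, 2(k−1)τ + s + τ}` (so `s = 0` gives the blocks `I_k` and `s = τ`
gives the blocks `I'_k`), realized as the image of `P^⊗m` under the map sending `(ω_1, …, ω_m)`
to the array of block trajectories `(k, i) ↦ X_{2(k−1)τ + s + 1 + i}(ω_k)`. -/
noncomputable def prodBlockLaw {Ω 𝒳 : Type*} [MeasurableSpace Ω] [MeasurableSpace 𝒳]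
    (P : Measure Ω) [IsProbabilityMeasure P] (X : ℕ → Ω → 𝒳) (m τ s : ℕ) :
    Measure (Fin m → Fin τ → 𝒳) :=
  (Measure.pi fun _ : Fin m => P).map
    (fun ωs k i => X (2*(k:ℕ)*τ + s + 1 + (i:ℕ)) (ωs k))

section Helpers

variable {Ω 𝒳 : Type*} [MeasurableSpace Ω] [MeasurableSpace 𝒳]

lemma abs_prob_sub_le_two {α β : Type*} [MeasurableSpace α] [MeasurableSpace β]
    (μ : Measure α) (ν : Measure β) [IsProbabilityMeasure μ] [IsProbabilityMeasure ν]
    (s : Set α) (t : Set β) : |(μ s).toReal - (ν t).toReal| ≤ 2 := by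
  have h1 : (μ s).toReal ≤ 1 := by
    simpa using ENNReal.toReal_mono ENNReal.one_ne_top prob_le_one
  have h2 : (ν t).toReal ≤ 1 := by
    simpa using ENNReal.toReal_mono ENNReal.one_ne_top prob_le_one
  have h3 := ENNReal.toReal_nonneg (a := μ s)
  have h4 := ENNReal.toReal_nonneg (a := ν t)
  rw [abs_le]; constructor <;> linarith

lemma term_le_betaMix (P : Measure Ω) [IsProbabilityMeasure P] (X : ℕ → Ω → 𝒳)
    (hmeas : ∀ i, Measurable (X i)) (τ j : ℕ)
    (A : Set ((Set.Icc 1 j → 𝒳) × (Set.Ici (j + τ) → 𝒳))) (hA : MeasurableSet A) :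
    |(P ((fun ω => ((fun i : Set.Icc 1 j => X i.1 ω), (fun i : Set.Ici (j + τ) => X i.1 ω))) ⁻¹' A)).toReal
      - (((P.map fun ω => fun i : Set.Icc 1 j => X i.1 ω).prod
          (P.map fun ω => fun i : Set.Ici (j + τ) => X i.1 ω)) A).toReal| ≤ betaMix P X τ := by
  have hR1 : Measurable (fun ω => fun i : Set.Icc 1 j => X i.1 ω) :=
    measurable_pi_lambda _ fun i => hmeas _
  have hR2 : Measurable (fun ω => fun i : Set.Ici (j + τ) => X i.1 ω) :=
    measurable_pi_lambda _ fun i => hmeas _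
  haveI : IsProbabilityMeasure (P.map fun ω => fun i : Set.Icc 1 j => X i.1 ω) :=
    Measure.isProbabilityMeasure_map hR1.aemeasurable
  haveI : IsProbabilityMeasure (P.map fun ω => fun i : Set.Ici (j + τ) => X i.1 ω) :=
    Measure.isProbabilityMeasure_map hR2.aemeasurable
  set g : ℕ → ℝ := fun j => ⨆ A : {A : Set ((Set.Icc 1 j → 𝒳) × (Set.Ici (j + τ) → 𝒳)) // MeasurableSet A},
    |(P ((fun ω => ((fun i : Set.Icc 1 j => X i.1 ω), (fun i : Set.Ici (j + τ) => X i.1 ω))) ⁻¹' A.1)).toReal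
      - (((P.map fun ω => fun i : Set.Icc 1 j => X i.1 ω).prod
          (P.map fun ω => fun i : Set.Ici (j + τ) => X i.1 ω)) A.1).toReal| with hg
  have hbdd : ∀ j', g j' ≤ 2 := by
    intro j'
    rw [hg]
    apply Real.iSup_le _ (by norm_num)
    intro B
    have hR1' : Measurable (fun ω => fun i : Set.Icc 1 j' => X i.1 ω) :=
      measurable_pi_lambda _ fun i => hmeas _
    have hR2' : Measurable (fun ω => fun i : Set.Ici (j' + τ) => X i.1 ω) :=
      measurable_pi_lambda _ fun i => hmeas _
    haveI : IsProbabilityMeasure (P.map fun ω => fun i : Set.Icc 1 j' => X i.1 ω) :=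
      Measure.isProbabilityMeasure_map hR1'.aemeasurable
    haveI : IsProbabilityMeasure (P.map fun ω => fun i : Set.Ici (j' + τ) => X i.1 ω) :=
      Measure.isProbabilityMeasure_map hR2'.aemeasurable
    exact abs_prob_sub_le_two P _ _ _
  have step1 : |(P ((fun ω => ((fun i : Set.Icc 1 j => X i.1 ω), (fun i : Set.Ici (j + τ) => X i.1 ω))) ⁻¹' A)).toReal
      - (((P.map fun ω => fun i : Set.Icc 1 j => X i.1 ω).prod
          (P.map fun ω => fun i : Set.Ici (j + τ) => X i.1 ω)) A).toReal| ≤ g j := by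
    rw [hg]
    refine le_ciSup (f := fun B : {A : Set ((Set.Icc 1 j → 𝒳) × (Set.Ici (j + τ) → 𝒳)) // MeasurableSet A} =>
      |(P ((fun ω => ((fun i : Set.Icc 1 j => X i.1 ω), (fun i : Set.Ici (j + τ) => X i.1 ω))) ⁻¹' B.1)).toReal
      - (((P.map fun ω => fun i : Set.Icc 1 j => X i.1 ω).prod
          (P.map fun ω => fun i : Set.Ici (j + τ) => X i.1 ω)) B.1).toReal|) ?_ ⟨A, hA⟩
    refine ⟨2, ?_⟩
    rintro x ⟨B, rfl⟩
    exact abs_prob_sub_le_two P _ _ _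
  refine step1.trans ?_
  exact le_ciSup ⟨2, by rintro x ⟨j', rfl⟩; exact hbdd j'⟩ j

lemma betaMix_nonneg (P : Measure Ω) [IsProbabilityMeasure P] (X : ℕ → Ω → 𝒳)
    (hmeas : ∀ i, Measurable (X i)) (τ : ℕ) : 0 ≤ betaMix P X τ := by
  have h := term_le_betaMix P X hmeas τ 0 ∅ MeasurableSet.empty
  simpa using h

lemma factored_le_betaMix (P : Measure Ω) [IsProbabilityMeasure P] (X : ℕ → Ω → 𝒳)
    (hmeas : ∀ i, Measurable (X i)) (τ j : ℕ)
    {E₁ E₂ : Type*} [MeasurableSpace E₁] [MeasurableSpace E₂]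
    {φ : (Set.Icc 1 j → 𝒳) → E₁} {ψ : (Set.Ici (j + τ) → 𝒳) → E₂}
    (hφ : Measurable φ) (hψ : Measurable ψ) {C : Set (E₁ × E₂)} (hC : MeasurableSet C) :
    |(P ((fun ω => (φ (fun i : Set.Icc 1 j => X i.1 ω), ψ (fun i : Set.Ici (j + τ) => X i.1 ω))) ⁻¹' C)).toReal
      - (((P.map fun ω => φ (fun i : Set.Icc 1 j => X i.1 ω)).prod
          (P.map fun ω => ψ (fun i : Set.Ici (j + τ) => X i.1 ω))) C).toReal| ≤ betaMix P X τ := by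
  have hR1 : Measurable (fun ω => fun i : Set.Icc 1 j => X i.1 ω) :=
    measurable_pi_lambda _ fun i => hmeas _
  have hR2 : Measurable (fun ω => fun i : Set.Ici (j + τ) => X i.1 ω) :=
    measurable_pi_lambda _ fun i => hmeas _
  haveI : IsProbabilityMeasure (P.map fun ω => fun i : Set.Icc 1 j => X i.1 ω) :=
    Measure.isProbabilityMeasure_map hR1.aemeasurable
  haveI : IsProbabilityMeasure (P.map fun ω => fun i : Set.Ici (j + τ) => X i.1 ω) :=
    Measure.isProbabilityMeasure_map hR2.aemeasurable
  have hD : MeasurableSet (Prod.map φ ψ ⁻¹' C) := (hφ.prodMap hψ) hC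
  have hmap1 : (P.map fun ω => φ (fun i : Set.Icc 1 j => X i.1 ω))
      = (P.map fun ω => fun i : Set.Icc 1 j => X i.1 ω).map φ :=
    (Measure.map_map hφ hR1).symm
  have hmap2 : (P.map fun ω => ψ (fun i : Set.Ici (j + τ) => X i.1 ω))
      = (P.map fun ω => fun i : Set.Ici (j + τ) => X i.1 ω).map ψ :=
    (Measure.map_map hψ hR2).symm
  have hprod : (((P.map fun ω => φ (fun i : Set.Icc 1 j => X i.1 ω)).prod
          (P.map fun ω => ψ (fun i : Set.Ici (j + τ) => X i.1 ω))) C)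
      = (((P.map fun ω => fun i : Set.Icc 1 j => X i.1 ω).prod
          (P.map fun ω => fun i : Set.Ici (j + τ) => X i.1 ω)) (Prod.map φ ψ ⁻¹' C)) := by
    rw [hmap1, hmap2, Measure.map_prod_map _ _ hφ hψ,
      Measure.map_apply (hφ.prodMap hψ) hC]
  rw [hprod]
  exact term_le_betaMix P X hmeas τ j (Prod.map φ ψ ⁻¹' C) hD

lemma prod_diff_le {E₁ E₂ : Type*} [MeasurableSpace E₁] [MeasurableSpace E₂]
    (lam : Measure E₁) [IsProbabilityMeasure lam] (μ ν : Measure E₂)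
    [IsProbabilityMeasure μ] [IsProbabilityMeasure ν]
    {C : Set (E₁ × E₂)} (hC : MeasurableSet C) {c : ℝ} (hc : 0 ≤ c)
    (h : ∀ x, |(μ (Prod.mk x ⁻¹' C)).toReal - (ν (Prod.mk x ⁻¹' C)).toReal| ≤ c) :
    |((lam.prod μ) C).toReal - ((lam.prod ν) C).toReal| ≤ c := by
  have key : ∀ (μ' ν' : Measure E₂), IsProbabilityMeasure μ' → IsProbabilityMeasure ν' →
      (∀ x, (μ' (Prod.mk x ⁻¹' C)).toReal - (ν' (Prod.mk x ⁻¹' C)).toReal ≤ c) →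
      (lam.prod μ') C ≤ (lam.prod ν') C + ENNReal.ofReal c := by
    intro μ' ν' hμ' hν' hx
    haveI := hμ'; haveI := hν'
    rw [Measure.prod_apply hC, Measure.prod_apply hC]
    calc ∫⁻ x, μ' (Prod.mk x ⁻¹' C) ∂lam
        ≤ ∫⁻ x, (ν' (Prod.mk x ⁻¹' C) + ENNReal.ofReal c) ∂lam := by
          refine lintegral_mono fun x => ?_
          have h1 : (μ' (Prod.mk x ⁻¹' C)).toReal ≤ (ν' (Prod.mk x ⁻¹' C)).toReal + c := by
            linarith [hx x]
          calc μ' (Prod.mk x ⁻¹' C) = ENNReal.ofReal (μ' (Prod.mk x ⁻¹' C)).toReal :=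
                (ENNReal.ofReal_toReal (measure_ne_top _ _)).symm
            _ ≤ ENNReal.ofReal ((ν' (Prod.mk x ⁻¹' C)).toReal + c) := ENNReal.ofReal_le_ofReal h1
            _ = ENNReal.ofReal (ν' (Prod.mk x ⁻¹' C)).toReal + ENNReal.ofReal c :=
                ENNReal.ofReal_add ENNReal.toReal_nonneg hc
            _ = ν' (Prod.mk x ⁻¹' C) + ENNReal.ofReal c := by
                rw [ENNReal.ofReal_toReal (measure_ne_top _ _)]
      _ = ∫⁻ x, ν' (Prod.mk x ⁻¹' C) ∂lam + ENNReal.ofReal c := by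
          rw [lintegral_add_right _ measurable_const, lintegral_const, measure_univ, mul_one]
  have h1 : (lam.prod μ) C ≤ (lam.prod ν) C + ENNReal.ofReal c :=
    key μ ν inferInstance inferInstance fun x => by linarith [abs_le.1 (h x)]
  have h2 : (lam.prod ν) C ≤ (lam.prod μ) C + ENNReal.ofReal c :=
    key ν μ inferInstance inferInstance fun x => by
      have := abs_le.1 (h x); linarith [this.1]
  have hμt : (lam.prod μ) C ≠ ⊤ := measure_ne_top _ _
  have hνt : (lam.prod ν) C ≠ ⊤ := measure_ne_top _ _
  have r1 : ((lam.prod μ) C).toReal ≤ ((lam.prod ν) C).toReal + c := by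
    have := ENNReal.toReal_mono (by finiteness) h1
    rwa [ENNReal.toReal_add hνt ENNReal.ofReal_ne_top, ENNReal.toReal_ofReal hc] at this
  have r2 : ((lam.prod ν) C).toReal ≤ ((lam.prod μ) C).toReal + c := by
    have := ENNReal.toReal_mono (by finiteness) h2
    rwa [ENNReal.toReal_add hμt ENNReal.ofReal_ne_top, ENNReal.toReal_ofReal hc] at this
  rw [abs_le]; constructor <;> linarith

lemma pi_one_map (P : Measure Ω) [IsProbabilityMeasure P] :
    (Measure.pi fun _ : Fin 1 => P).map (Function.eval 0) = P := by
  ext s hs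
  rw [Measure.map_apply (measurable_pi_apply 0) hs]
  have hset : Function.eval 0 ⁻¹' s = Set.pi Set.univ (fun _ : Fin 1 => s) := by
    ext x
    simp [Fin.forall_fin_one, Function.eval]
  rw [hset, Measure.pi_pi]
  simp

lemma blockMap_measurable (P : Measure Ω) (X : ℕ → Ω → 𝒳) (hmeas : ∀ i, Measurable (X i))
    (m τ s : ℕ) :
    Measurable (fun (ωs : Fin m → Ω) (k : Fin m) (i : Fin τ) =>
      X (2*(k:ℕ)*τ + s + 1 + (i:ℕ)) (ωs k)) :=
  measurable_pi_lambda _ fun k => measurable_pi_lambda _ fun i =>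
    (hmeas _).comp (measurable_pi_apply k)

lemma prodBlockLaw_isProb (P : Measure Ω) [IsProbabilityMeasure P] (X : ℕ → Ω → 𝒳)
    (hmeas : ∀ i, Measurable (X i)) (m τ s : ℕ) :
    IsProbabilityMeasure (prodBlockLaw P X m τ s) :=
  Measure.isProbabilityMeasure_map (blockMap_measurable P X hmeas m τ s).aemeasurable

end Helpers
section Aux

variable {Ω 𝒳 : Type*} [MeasurableSpace Ω] [MeasurableSpace 𝒳]

lemma aux_blocks (P : Measure Ω) [IsProbabilityMeasure P] (X : ℕ → Ω → 𝒳)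
    (hmeas : ∀ i, Measurable (X i)) (τ : ℕ) :
    ∀ m, 1 ≤ m → ∀ (s : ℕ) (A : Set (Fin m → Fin τ → 𝒳)), MeasurableSet A →
    |(P ((fun ω (k : Fin m) (i : Fin τ) => X (2*(k:ℕ)*τ + s + 1 + (i:ℕ)) ω) ⁻¹' A)).toReal
      - (prodBlockLaw P X m τ s A).toReal| ≤ ((m:ℝ) - 1) * betaMix P X τ := by
  intro m hm
  induction m, hm using Nat.le_induction with
  | base =>
    intro s A hA
    have hg : Measurable (fun ω (k : Fin 1) (i : Fin τ) => X (2*(k:ℕ)*τ + s + 1 + (i:ℕ)) ω) :=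
      measurable_pi_lambda _ fun k => measurable_pi_lambda _ fun i => hmeas _
    have heq : prodBlockLaw P X 1 τ s A
        = P ((fun ω (k : Fin 1) (i : Fin τ) => X (2*(k:ℕ)*τ + s + 1 + (i:ℕ)) ω) ⁻¹' A) := by
      rw [prodBlockLaw, Measure.map_apply (blockMap_measurable P X hmeas 1 τ s) hA]
      have hset : (fun (ωs : Fin 1 → Ω) (k : Fin 1) (i : Fin τ) =>
            X (2*(k:ℕ)*τ + s + 1 + (i:ℕ)) (ωs k)) ⁻¹' A
          = Function.eval 0 ⁻¹' ((fun ω (k : Fin 1) (i : Fin τ) =>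
            X (2*(k:ℕ)*τ + s + 1 + (i:ℕ)) ω) ⁻¹' A) := by
        ext ωs
        have hfun : (fun (k : Fin 1) (i : Fin τ) => X (2*(k:ℕ)*τ + s + 1 + (i:ℕ)) (ωs k))
            = fun (k : Fin 1) (i : Fin τ) => X (2*(k:ℕ)*τ + s + 1 + (i:ℕ)) (ωs 0) := by
          funext k i
          rw [Subsingleton.elim k 0]
        simp only [Set.mem_preimage, Function.eval]
        rw [hfun]
      rw [hset, ← Measure.map_apply (measurable_pi_apply 0) (hg hA), pi_one_map]
    rw [heq]
    simp
  | succ n hn IH =>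
    intro s A hA
    -- the measurable equivalence splitting off the first block
    set e : (Fin (n+1) → (Fin τ → 𝒳)) ≃ᵐ (Fin τ → 𝒳) × (Fin n → (Fin τ → 𝒳)) :=
      MeasurableEquiv.piFinSuccAbove (fun _ => (Fin τ → 𝒳)) 0 with he
    set C : Set ((Fin τ → 𝒳) × (Fin n → (Fin τ → 𝒳))) := e.symm ⁻¹' A with hCdef
    have hC : MeasurableSet C := e.symm.measurable hA
    have hAC : ∀ x, x ∈ A ↔ e x ∈ C := by
      intro x
      simp [hCdef]
    -- block maps
    set T0 : Ω → (Fin τ → 𝒳) := fun ω i => X (s + 1 + (i:ℕ)) ω with hT0def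
    set Rest : Ω → (Fin n → (Fin τ → 𝒳)) :=
      fun ω k i => X (2*(k:ℕ)*τ + (s + 2*τ) + 1 + (i:ℕ)) ω with hRestdef
    have hT0 : Measurable T0 := measurable_pi_lambda _ fun i => hmeas _
    have hRest : Measurable Rest :=
      measurable_pi_lambda _ fun k => measurable_pi_lambda _ fun i => hmeas _
    haveI : IsProbabilityMeasure (P.map T0) := Measure.isProbabilityMeasure_map hT0.aemeasurable
    haveI : IsProbabilityMeasure (P.map Rest) := Measure.isProbabilityMeasure_map hRest.aemeasurable
    haveI := prodBlockLaw_isProb P X hmeas n τ (s + 2*τ)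
    -- key pointwise identity
    have hkey : ∀ (f : Fin (n+1) → Fin τ → 𝒳) (ω : Ω) (g : Fin (n+1) → Ω),
        True := fun _ _ _ => trivial
    have hsplit : ∀ ω : Ω, e (fun (k : Fin (n+1)) (i : Fin τ) => X (2*(k:ℕ)*τ + s + 1 + (i:ℕ)) ω)
        = (T0 ω, Rest ω) := by
      intro ω
      rw [he]
      refine Prod.ext ?_ ?_
      · show (fun i : Fin τ => X (2*((0 : Fin (n+1)):ℕ)*τ + s + 1 + (i:ℕ)) ω) = T0 ω
        funext i
        rw [hT0def]
        congr 1
        simp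
      · show (fun (j : Fin n) (i : Fin τ) =>
            X (2*(((0 : Fin (n+1)).succAbove j : Fin (n+1)):ℕ)*τ + s + 1 + (i:ℕ)) ω) = Rest ω
        funext j i
        rw [hRestdef]
        congr 1
        rw [Fin.zero_succAbove, Fin.val_succ]
        ring
    -- event identity
    have hevent : ((fun ω (k : Fin (n+1)) (i : Fin τ) => X (2*(k:ℕ)*τ + s + 1 + (i:ℕ)) ω) ⁻¹' A)
        = (fun ω => (T0 ω, Rest ω)) ⁻¹' C := by
      ext ω
      simp only [Set.mem_preimage]
      rw [hAC, hsplit ω]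
    -- product measure identity
    have hprodId : prodBlockLaw P X (n+1) τ s A
        = ((P.map T0).prod (prodBlockLaw P X n τ (s + 2*τ))) C := by
      set eΩ : (Fin (n+1) → Ω) ≃ᵐ Ω × (Fin n → Ω) :=
        MeasurableEquiv.piFinSuccAbove (fun _ => Ω) 0 with heΩ
      have hpi : (Measure.pi fun _ : Fin (n+1) => P).map eΩ
          = P.prod (Measure.pi fun _ : Fin n => P) :=
        (measurePreserving_piFinSuccAbove (fun _ : Fin (n+1) => P) 0).map_eq
      have hΨ' := blockMap_measurable P X hmeas n τ (s + 2*τ)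
      rw [prodBlockLaw, prodBlockLaw,
        Measure.map_prod_map _ _ hT0 hΨ',
        Measure.map_apply (hT0.prodMap hΨ') hC,
        ← hpi,
        Measure.map_apply eΩ.measurable ((hT0.prodMap hΨ') hC),
        Measure.map_apply (blockMap_measurable P X hmeas (n+1) τ s) hA]
      congr 1
      ext ωs
      simp only [Set.mem_preimage]
      rw [hAC]
      have : e ((fun (ωs : Fin (n+1) → Ω) (k : Fin (n+1)) (i : Fin τ) =>
          X (2*(k:ℕ)*τ + s + 1 + (i:ℕ)) (ωs k)) ωs)
          = Prod.map T0 (fun (ωs : Fin n → Ω) (k : Fin n) (i : Fin τ) =>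
              X (2*(k:ℕ)*τ + (s + 2*τ) + 1 + (i:ℕ)) (ωs k)) (eΩ ωs) := by
        rw [he, heΩ]
        refine Prod.ext ?_ ?_
        · show (fun i : Fin τ => X (2*((0 : Fin (n+1)):ℕ)*τ + s + 1 + (i:ℕ)) (ωs 0))
            = T0 (ωs 0)
          funext i
          rw [hT0def]
          congr 1
          simp
        · show (fun (j : Fin n) (i : Fin τ) =>
              X (2*(((0 : Fin (n+1)).succAbove j : Fin (n+1)):ℕ)*τ + s + 1 + (i:ℕ))
                (ωs ((0 : Fin (n+1)).succAbove j)))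
            = fun (j : Fin n) (i : Fin τ) =>
              X (2*(j:ℕ)*τ + (s + 2*τ) + 1 + (i:ℕ)) (ωs ((0 : Fin (n+1)).succAbove j))
          funext j i
          congr 1
          rw [Fin.zero_succAbove, Fin.val_succ]
          ring
      rw [this]
    -- β-mixing step: define the factoring maps
    have hβ := betaMix_nonneg P X hmeas τ
    set φ : (Set.Icc 1 (s+τ) → 𝒳) → (Fin τ → 𝒳) :=
      fun f i => f ⟨s + 1 + (i:ℕ), by
        have := i.isLt
        simp only [Set.mem_Icc]
        omega⟩ with hφdef
    set ψ : (Set.Ici (s+τ+τ) → 𝒳) → (Fin n → (Fin τ → 𝒳)) :=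
      fun g k i => g ⟨2*(k:ℕ)*τ + (s + 2*τ) + 1 + (i:ℕ), by
        simp only [Set.mem_Ici]
        calc s + τ + τ = s + 2*τ := by ring
          _ ≤ 2*(k:ℕ)*τ + (s + 2*τ) := Nat.le_add_left _ _
          _ ≤ 2*(k:ℕ)*τ + (s + 2*τ) + 1 := Nat.le_add_right _ _
          _ ≤ 2*(k:ℕ)*τ + (s + 2*τ) + 1 + (i:ℕ) := Nat.le_add_right _ _⟩ with hψdef
    have hφ : Measurable φ := measurable_pi_lambda _ fun i => measurable_pi_apply _
    have hψ : Measurable ψ :=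
      measurable_pi_lambda _ fun k => measurable_pi_lambda _ fun i => measurable_pi_apply _
    have step1 := factored_le_betaMix P X hmeas τ (s+τ) hφ hψ hC
    have e1 : (fun ω => (φ (fun i : Set.Icc 1 (s+τ) => X i.1 ω),
        ψ (fun i : Set.Ici (s+τ+τ) => X i.1 ω))) = fun ω => (T0 ω, Rest ω) := rfl
    have e2 : (P.map fun ω => φ (fun i : Set.Icc 1 (s+τ) => X i.1 ω)) = P.map T0 := rfl
    have e3 : (P.map fun ω => ψ (fun i : Set.Ici (s+τ+τ) => X i.1 ω)) = P.map Rest := rfl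
    rw [e1, e2, e3] at step1
    -- second step: replace joint law of the rest by the product law
    have step2 : |(((P.map T0).prod (P.map Rest)) C).toReal
        - (((P.map T0).prod (prodBlockLaw P X n τ (s + 2*τ))) C).toReal|
        ≤ ((n:ℝ) - 1) * betaMix P X τ := by
      refine prod_diff_le (P.map T0) (P.map Rest) (prodBlockLaw P X n τ (s + 2*τ)) hC
        (mul_nonneg (by exact_mod_cast sub_nonneg.mpr (by exact_mod_cast hn : (1:ℝ) ≤ (n:ℝ))) hβ)
        fun x => ?_
      have hCx : MeasurableSet (Prod.mk x ⁻¹' C) := measurable_prodMk_left hC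
      rw [Measure.map_apply hRest hCx]
      exact IH (s + 2*τ) (Prod.mk x ⁻¹' C) hCx
    -- combine
    rw [hevent, hprodId]
    have habs := abs_sub_le
      (P ((fun ω => (T0 ω, Rest ω)) ⁻¹' C)).toReal
      (((P.map T0).prod (P.map Rest)) C).toReal
      (((P.map T0).prod (prodBlockLaw P X n τ (s + 2*τ))) C).toReal
    have hgoal : ((((n:ℕ)+1 : ℕ):ℝ) - 1) * betaMix P X τ
        = betaMix P X τ + ((n:ℝ) - 1) * betaMix P X τ := by
      push_cast
      ring
    rw [hgoal]
    linarith [step1, step2, habs]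

end Aux

/-- Lemma 2: for every event `B ∈ Σ(I_1 ∪ … ∪ I_m)` (realized as the preimage of a measurable
set `A` of block arrays under the block-restriction map),
`|μ_{I_1∪…∪I_m}(B) − (μ_{I_1} × … × μ_{I_m})(B)| ≤ (m−1) β_μ(τ)`, and analogously for the
primed blocks. -/
theorem betamix_blocks
    {Ω 𝒳 : Type*} [MeasurableSpace Ω] [MeasurableSpace 𝒳]
    (P : Measure Ω) [IsProbabilityMeasure P]
    (X : ℕ → Ω → 𝒳) (hmeas : ∀ i, Measurable (X i))
    (m τ : ℕ) (hm : 0 < m) (hτ : 0 < τ)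
    (A A' : Set (Fin m → Fin τ → 𝒳)) (hA : MeasurableSet A) (hA' : MeasurableSet A') :
    |(P ((fun ω => fun (k : Fin m) (i : Fin τ) => X (2*(k:ℕ)*τ + 1 + (i:ℕ)) ω) ⁻¹' A)).toReal
        - (prodBlockLaw P X m τ 0 A).toReal| ≤ ((m:ℝ) - 1) * betaMix P X τ ∧
    |(P ((fun ω => fun (k : Fin m) (i : Fin τ) => X ((2*(k:ℕ)+1)*τ + 1 + (i:ℕ)) ω) ⁻¹' A')).toReal
        - (prodBlockLaw P X m τ τ A').toReal| ≤ ((m:ℝ) - 1) * betaMix P X τ := by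
  constructor
  · have h := aux_blocks P X hmeas τ m hm 0 A hA
    have hf : (fun ω (k : Fin m) (i : Fin τ) => X (2*(k:ℕ)*τ + 0 + 1 + (i:ℕ)) ω)
        = fun ω (k : Fin m) (i : Fin τ) => X (2*(k:ℕ)*τ + 1 + (i:ℕ)) ω := by
      funext ω k i
      norm_num
    rwa [hf] at h
  · have h := aux_blocks P X hmeas τ m hm τ A' hA'
    have hf : (fun ω (k : Fin m) (i : Fin τ) => X (2*(k:ℕ)*τ + τ + 1 + (i:ℕ)) ω)
        = fun ω (k : Fin m) (i : Fin τ) => X ((2*(k:ℕ)+1)*τ + 1 + (i:ℕ)) ω := by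
      funext ω k i
      congr 1
      ring
    rwa [hf] at h
end

section
/- Let x_1, …, x_m be elements of a Hilbert space H with ‖x_i‖ ≤ c for all i, m ≥ 2, and let f(x) = Σ_{i,j: i≠j} ‖x_i − x_j‖². For y ∈ H let S^k_y(x) denote x with its k-th coordinate replaced by y. Then for every k ∈ {1,…,m}, f(x) − inf_{y: ‖y‖≤c} f(S^k_y(x)) = (2/(m−1)) ‖Σ_{i: i≠k} (x_i − x_k)‖² ≤ 8(m−1)c²; moreover Σ_{k=1}^m ( (2/(m−1)) ‖Σ_{i: i≠k} (x_i − x_k)‖² )² ≤ 16(m−1) c² f(x). -/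
open Finset

/-- The pairwise-distance functional `f(x) = Σ_{i≠j} ‖x_i − x_j‖²`. -/
noncomputable def pairDist {H : Type*} [NormedAddCommGroup H] {m : ℕ}
    (x : Fin m → H) : ℝ :=
  ∑ i, ∑ j ∈ Finset.univ.erase i, ‖x i - x j‖^2

lemma pairDist_update_eq {H : Type*} [NormedAddCommGroup H] {m : ℕ}
    (x : Fin m → H) (k : Fin m) (y : H) :
    pairDist (Function.update x k y) =
      (∑ i ∈ Finset.univ.erase k, ∑ j ∈ (Finset.univ.erase k).erase i, ‖x i - x j‖^2)
      + 2 * ∑ i ∈ Finset.univ.erase k, ‖x i - y‖^2 := by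
  unfold pairDist
  rw [← Finset.sum_erase_add univ _ (mem_univ k)]
  have hk : Function.update x k y k = y := Function.update_self k y x
  have hne : ∀ i ∈ univ.erase k, Function.update x k y i = x i := by
    intro i hi
    exact Function.update_of_ne (Finset.ne_of_mem_erase hi) y x
  have h1 : ∑ j ∈ univ.erase k, ‖Function.update x k y k - Function.update x k y j‖^2
      = ∑ j ∈ univ.erase k, ‖x j - y‖^2 := by
    refine Finset.sum_congr rfl fun j hj => ?_
    rw [hk, hne j hj, norm_sub_rev]
  have h2 : ∀ i ∈ univ.erase k,
      ∑ j ∈ univ.erase i, ‖Function.update x k y i - Function.update x k y j‖^2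
      = ‖x i - y‖^2 + ∑ j ∈ (univ.erase k).erase i, ‖x i - x j‖^2 := by
    intro i hi
    have hik : i ≠ k := Finset.ne_of_mem_erase hi
    have hkmem : k ∈ univ.erase i := Finset.mem_erase.mpr ⟨hik.symm, mem_univ k⟩
    rw [← Finset.add_sum_erase _ _ hkmem, hk, hne i hi, Finset.erase_right_comm]
    congr 1
    refine Finset.sum_congr rfl fun j hj => ?_
    rw [hne j (Finset.mem_of_mem_erase hj)]
  rw [Finset.sum_congr rfl h2, h1, Finset.sum_add_distrib]
  ring

lemma sum_norm_sub_sq {H : Type*} [NormedAddCommGroup H] [InnerProductSpace ℝ H]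
    {ι : Type*} (s : Finset ι) (x : ι → H) (y μ : H)
    (hμ : (s.card : ℝ) • μ = ∑ i ∈ s, x i) :
    ∑ i ∈ s, ‖x i - y‖^2 = ∑ i ∈ s, ‖x i - μ‖^2 + s.card * ‖y - μ‖^2 := by
  have expand : ∀ z : H, ∑ i ∈ s, ‖x i - z‖^2
      = ∑ i ∈ s, ‖x i‖^2 - 2 * inner ℝ (∑ i ∈ s, x i) z + s.card * ‖z‖^2 := by
    intro z
    simp only [norm_sub_sq_real, Finset.sum_add_distrib, Finset.sum_sub_distrib,
      sum_inner, Finset.mul_sum, Finset.sum_const, nsmul_eq_mul]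
  rw [expand, expand, ← hμ, real_inner_smul_left, real_inner_smul_left,
    norm_sub_sq_real, real_inner_comm y μ, real_inner_self_eq_norm_sq]
  ring

lemma ciInf_ball_eq {H : Type*} [NormedAddCommGroup H]
    (c : ℝ) (μ : H) (hμc : ‖μ‖ ≤ c) (g : H → ℝ)
    (hFle : ∀ y : H, g μ ≤ g y) :
    (⨅ y : {y : H // ‖y‖ ≤ c}, g y.1) = g μ := by
  have hne : Nonempty {y : H // ‖y‖ ≤ c} := ⟨⟨μ, hμc⟩⟩
  have hbdd : BddBelow (Set.range fun y : {y : H // ‖y‖ ≤ c} => g y.1) := by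
    refine ⟨g μ, ?_⟩
    rintro _ ⟨y, rfl⟩
    exact hFle y.1
  apply le_antisymm
  · exact ciInf_le hbdd ⟨μ, hμc⟩
  · exact le_ciInf fun y => hFle y.1


set_option maxHeartbeats 1000000 in
/-- Self-bounding properties of `f(x) = Σ_{i≠j} ‖x_i − x_j‖²`: for each coordinate `k`,
`f(x) − inf_{‖y‖≤c} f(x with k-th coordinate replaced by y) = (2/(m−1)) ‖Σ_{i≠k}(x_i − x_k)‖²
  ≤ 8(m−1)c²`,
and `Σ_k ((2/(m−1)) ‖Σ_{i≠k}(x_i − x_k)‖²)² ≤ 16(m−1)c² f(x)`. -/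
theorem pairDist_self_bounding
    {H : Type*} [NormedAddCommGroup H] [InnerProductSpace ℝ H]
    (m : ℕ) (hm : 2 ≤ m) (c : ℝ) (x : Fin m → H) (hx : ∀ i, ‖x i‖ ≤ c) :
    (∀ k : Fin m,
      pairDist x - ⨅ y : {y : H // ‖y‖ ≤ c}, pairDist (Function.update x k y.1)
        = (2/((m:ℝ)-1)) * ‖∑ i ∈ Finset.univ.erase k, (x i - x k)‖^2 ∧
      (2/((m:ℝ)-1)) * ‖∑ i ∈ Finset.univ.erase k, (x i - x k)‖^2 ≤ 8 * ((m:ℝ)-1) * c^2) ∧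
    ∑ k, ((2/((m:ℝ)-1)) * ‖∑ i ∈ Finset.univ.erase k, (x i - x k)‖^2)^2
      ≤ 16 * ((m:ℝ)-1) * c^2 * pairDist x := by

  have hm2 : (2:ℝ) ≤ (m:ℝ) := by exact_mod_cast hm
  have hnpos : (0:ℝ) < (m:ℝ) - 1 := by linarith
  have hc0 : 0 ≤ c := le_trans (norm_nonneg _) (hx ⟨0, by omega⟩)
  have hcard : ∀ k : Fin m, (((univ.erase k).card : ℕ) : ℝ) = (m:ℝ) - 1 := by
    intro k
    rw [Finset.card_erase_of_mem (mem_univ k), Finset.card_univ, Fintype.card_fin,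
      Nat.cast_sub (by omega : 1 ≤ m), Nat.cast_one]
  -- per-k bound
  have hbound : ∀ k : Fin m,
      (2/((m:ℝ)-1)) * ‖∑ i ∈ Finset.univ.erase k, (x i - x k)‖^2 ≤ 8 * ((m:ℝ)-1) * c^2 := by
    intro k
    have hnormle : ‖∑ i ∈ Finset.univ.erase k, (x i - x k)‖ ≤ ((m:ℝ)-1) * (2*c) := by
      calc ‖∑ i ∈ Finset.univ.erase k, (x i - x k)‖
          ≤ ∑ i ∈ Finset.univ.erase k, ‖x i - x k‖ := norm_sum_le _ _
        _ ≤ ∑ _i ∈ Finset.univ.erase k, (2*c) := by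
            refine Finset.sum_le_sum fun i _ => ?_
            calc ‖x i - x k‖ ≤ ‖x i‖ + ‖x k‖ := norm_sub_le _ _
              _ ≤ 2*c := by have := hx i; have := hx k; linarith
        _ = ((m:ℝ)-1) * (2*c) := by
            rw [Finset.sum_const, nsmul_eq_mul, hcard k]
    have hsq : ‖∑ i ∈ Finset.univ.erase k, (x i - x k)‖^2 ≤ (((m:ℝ)-1) * (2*c))^2 :=
      pow_le_pow_left₀ (norm_nonneg _) hnormle 2
    calc (2/((m:ℝ)-1)) * ‖∑ i ∈ Finset.univ.erase k, (x i - x k)‖^2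
        ≤ (2/((m:ℝ)-1)) * (((m:ℝ)-1) * (2*c))^2 := by
          exact mul_le_mul_of_nonneg_left hsq (by positivity)
      _ = 8 * ((m:ℝ)-1) * c^2 := by field_simp; ring
  -- per-k Cauchy-Schwarz row bound
  have hrow : ∀ k : Fin m,
      (2/((m:ℝ)-1)) * ‖∑ i ∈ Finset.univ.erase k, (x i - x k)‖^2
        ≤ 2 * ∑ i ∈ Finset.univ.erase k, ‖x i - x k‖^2 := by
    intro k
    have h1 : ‖∑ i ∈ Finset.univ.erase k, (x i - x k)‖^2
        ≤ ((m:ℝ)-1) * ∑ i ∈ Finset.univ.erase k, ‖x i - x k‖^2 := by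
      calc ‖∑ i ∈ Finset.univ.erase k, (x i - x k)‖^2
          ≤ (∑ i ∈ Finset.univ.erase k, ‖x i - x k‖)^2 := by
            exact pow_le_pow_left₀ (norm_nonneg _) (norm_sum_le _ _) 2
        _ ≤ ((univ.erase k).card : ℝ) * ∑ i ∈ Finset.univ.erase k, ‖x i - x k‖^2 := by
            exact_mod_cast sq_sum_le_card_mul_sum_sq (s := univ.erase k) (f := fun i => ‖x i - x k‖)
        _ = ((m:ℝ)-1) * ∑ i ∈ Finset.univ.erase k, ‖x i - x k‖^2 := by rw [hcard k]
    calc (2/((m:ℝ)-1)) * ‖∑ i ∈ Finset.univ.erase k, (x i - x k)‖^2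
        ≤ (2/((m:ℝ)-1)) * (((m:ℝ)-1) * ∑ i ∈ Finset.univ.erase k, ‖x i - x k‖^2) :=
          mul_le_mul_of_nonneg_left h1 (by positivity)
      _ = 2 * ∑ i ∈ Finset.univ.erase k, ‖x i - x k‖^2 := by field_simp
  have hD0 : ∀ k : Fin m,
      0 ≤ (2/((m:ℝ)-1)) * ‖∑ i ∈ Finset.univ.erase k, (x i - x k)‖^2 := by
    intro k; positivity
  have hne : Nonempty {y : H // ‖y‖ ≤ c} := ⟨⟨0, by simpa using hc0⟩⟩
  constructor
  · intro k
    refine ⟨?_, hbound k⟩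
    set μ : H := (((m:ℝ)-1)⁻¹) • ∑ i ∈ Finset.univ.erase k, x i with hμdef
    have hμ : (((univ.erase k).card : ℕ) : ℝ) • μ = ∑ i ∈ Finset.univ.erase k, x i := by
      rw [hcard k, hμdef, smul_smul, mul_inv_cancel₀ hnpos.ne', one_smul]
    have hμc : ‖μ‖ ≤ c := by
      rw [hμdef, norm_smul, Real.norm_eq_abs, abs_of_nonneg (by positivity)]
      calc (((m:ℝ)-1))⁻¹ * ‖∑ i ∈ Finset.univ.erase k, x i‖
          ≤ (((m:ℝ)-1))⁻¹ * (((m:ℝ)-1) * c) := by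
            refine mul_le_mul_of_nonneg_left ?_ (by positivity)
            calc ‖∑ i ∈ Finset.univ.erase k, x i‖
                ≤ ∑ i ∈ Finset.univ.erase k, ‖x i‖ := norm_sum_le _ _
              _ ≤ ∑ _i ∈ Finset.univ.erase k, c := Finset.sum_le_sum fun i _ => hx i
              _ = ((m:ℝ)-1) * c := by rw [Finset.sum_const, nsmul_eq_mul, hcard k]
        _ = c := by field_simp
    have hFle : ∀ y : H, pairDist (Function.update x k μ) ≤ pairDist (Function.update x k y) := by
      intro y
      rw [pairDist_update_eq, pairDist_update_eq,
        sum_norm_sub_sq (univ.erase k) x y μ hμ, hcard k]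
      nlinarith [norm_nonneg (y - μ), sq_nonneg ‖y - μ‖]
    have hinf : (⨅ y : {y : H // ‖y‖ ≤ c}, pairDist (Function.update x k y.1))
        = pairDist (Function.update x k μ) :=
      ciInf_ball_eq c μ hμc (fun y => pairDist (Function.update x k y)) hFle
    rw [hinf]
    have hxk : pairDist x = pairDist (Function.update x k (x k)) := by
      rw [Function.update_eq_self]
    rw [hxk, pairDist_update_eq, pairDist_update_eq,
      sum_norm_sub_sq (univ.erase k) x (x k) μ hμ, hcard k]
    have hvec : ∑ i ∈ Finset.univ.erase k, (x i - x k)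
        = (((m:ℝ)-1)) • (μ - x k) := by
      rw [Finset.sum_sub_distrib, Finset.sum_const, ← hμ,
        ← Nat.cast_smul_eq_nsmul ℝ ((univ.erase k).card) (x k), hcard k, smul_sub]
    have hnorm : ‖∑ i ∈ Finset.univ.erase k, (x i - x k)‖ = ((m:ℝ)-1) * ‖x k - μ‖ := by
      rw [hvec, norm_smul, Real.norm_eq_abs, abs_of_pos hnpos, norm_sub_rev]
    rw [hnorm]
    field_simp
    ring
  · calc ∑ k, ((2/((m:ℝ)-1)) * ‖∑ i ∈ Finset.univ.erase k, (x i - x k)‖^2)^2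
        ≤ ∑ k, (8 * ((m:ℝ)-1) * c^2) * (2 * ∑ i ∈ Finset.univ.erase k, ‖x i - x k‖^2) := by
          refine Finset.sum_le_sum fun k _ => ?_
          rw [sq]
          exact mul_le_mul (hbound k) (hrow k) (hD0 k) (by positivity)
      _ = 16 * ((m:ℝ)-1) * c^2 * ∑ k, ∑ i ∈ Finset.univ.erase k, ‖x i - x k‖^2 := by
          rw [Finset.mul_sum]; refine Finset.sum_congr rfl fun k _ => by ring
      _ = 16 * ((m:ℝ)-1) * c^2 * pairDist x := by
          unfold pairDist
          congr 1
          refine Finset.sum_congr rfl fun k _ => Finset.sum_congr rfl fun i _ => ?_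
          rw [norm_sub_rev]
end
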